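/- Let k be a positive integer with k ≡ 4 (mod 8). Then the set X₁ = ℤ² \ (S₂ ∪ S₃) is a disjoint union of vertical copies of T_k. -/

import Mathlib

/-- The punctured interval `T_k = {-k, …, -1, 1, …, k} ⊆ ℤ`. -/
def puncturedInterval (k : ℕ) : Set ℤ := {t : ℤ | t ≠ 0 ∧ -(k : ℤ) ≤ t ∧ t ≤ k}

/-- `S₂ = {(x, x + n(k+1)) : x - 2n ≡ 4, 5, 6 or 7 (mod 8)}`. -/
def S2 (k : ℕ) : Set (ℤ × ℤ) :=
  {p | ∃ x n : ℤ, p = (x, x + n * ((k : ℤ) + 1)) ∧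
    (x - 2 * n) % 8 ∈ ({4, 5, 6, 7} : Set ℤ)}

/-- `S₃ = {(x, x + n(k+1) + 1) : x - 2n ≡ 2, 3, 4 or 5 (mod 8)}`. -/
def S3 (k : ℕ) : Set (ℤ × ℤ) :=
  {p | ∃ x n : ℤ, p = (x, x + n * ((k : ℤ) + 1) + 1) ∧
    (x - 2 * n) % 8 ∈ ({2, 3, 4, 5} : Set ℤ)}

/-!
Call `w mod 4(k+1)`, where `w = y - x - ⌊x/2⌋(k+1) - 1`, the phase of `(x, y)`. Writing
`y = x + n(k+1)` (or `+ 1`) with `n = ⌊x/2⌋ + d`, the residue `x - 2n (mod 8)` depends only on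
`d (mod 4)`, so membership in `S₂ ∪ S₃` depends only on the phase, and the removed phases are
`k, 2k+1, 2k+2, 3k+3`. The two gaps between them, `[0, 2k]` and `[2k+3, 4k+3]`, are vertical
copies of `T_k` centred at the removed points of phase `k` and `3k+3`; so assigning to each point
the centre of its gap partitions `X₁` into such copies.
-/

theorem Int.exists_eq_mul_add_and_emod_four_eq_iff {q u s i : ℤ} (hi : 0 ≤ i)
    (hi4 : i < 4) (h0 : 0 ≤ i * q + s) (h1 : i * q + s < 4 * q) :
    (∃ d, u = d * q + s ∧ d % 4 = i) ↔ u % (4 * q) = i * q + s := by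
  constructor
  · rintro ⟨d, rfl, rfl⟩
    have hd : d * q + s = d % 4 * q + s + 4 * q * (d / 4) := by
      linear_combination (-q) * Int.emod_add_mul_ediv d 4
    rw [hd, Int.add_mul_emod_self_left, Int.emod_eq_of_lt h0 h1]
  · intro h
    refine ⟨4 * (u / (4 * q)) + i, ?_, by omega⟩
    have := Int.emod_add_mul_ediv u (4 * q)
    rw [h] at this
    linear_combination -this

section Partition

variable {α β : Type*} {tile : β → Set α} {X : Set α} {centers : Set β} {f : α → β}

theorem Set.pairwiseDisjoint_image_of_mem_iff_fiber
    (h : ∀ c ∈ centers, ∀ z, z ∈ tile c ↔ z ∈ X ∧ f z = c) :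
    (tile '' centers).PairwiseDisjoint id := by
  rintro _ ⟨c, hc, rfl⟩ _ ⟨c', hc', rfl⟩ hne
  refine Set.disjoint_left.mpr fun z hz hz' => hne ?_
  rw [← ((h c hc z).mp hz).2, ((h c' hc' z).mp hz').2]

theorem Set.sUnion_image_eq_of_mem_iff_fiber (hf : Set.MapsTo f X centers)
    (h : ∀ c ∈ centers, ∀ z, z ∈ tile c ↔ z ∈ X ∧ f z = c) :
    ⋃₀ (tile '' centers) = X := by
  ext z
  simp only [Set.sUnion_image, Set.mem_iUnion, exists_prop]
  exact ⟨fun ⟨c, hc, hz⟩ => ((h c hc z).mp hz).1,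
    fun hz => ⟨f z, hf hz, (h _ (hf hz) z).mpr ⟨hz, rfl⟩⟩⟩

end Partition

def phase (k : ℕ) (p : ℤ × ℤ) : ℤ := (p.2 - p.1 - p.1 / 2 * (k + 1) - 1) % (4 * (k + 1))

theorem phase_nonneg (k : ℕ) (p : ℤ × ℤ) : 0 ≤ phase k p :=
  Int.emod_nonneg _ (by omega)

theorem phase_lt (k : ℕ) (p : ℤ × ℤ) : phase k p < 4 * (k + 1) :=
  Int.emod_lt_of_pos _ (by omega)

theorem phase_add_snd {k : ℕ} {p : ℤ × ℤ} {t : ℤ} (h0 : 0 ≤ phase k p + t)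
    (h1 : phase k p + t < 4 * (k + 1)) : phase k (p.1, p.2 + t) = phase k p + t := by
  unfold phase at *
  rw [← Int.emod_eq_of_lt h0 h1, Int.emod_add_emod]
  ring_nf

theorem phase_eq_iff {k : ℕ} {p : ℤ × ℤ} {i r : ℤ} (hi : 0 ≤ i) (hi4 : i < 4) (hr : 0 ≤ r)
    (hr4 : r < 4 * (k + 1)) :
    phase k p = r ↔
      ∃ n, p.2 = p.1 + n * (k + 1) + (r - i * (k + 1)) + 1 ∧ (n - p.1 / 2) % 4 = i := by
  have key := Int.exists_eq_mul_add_and_emod_four_eq_iff (q := k + 1)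
    (u := p.2 - p.1 - p.1 / 2 * (k + 1) - 1) (s := r - i * (k + 1)) hi hi4 (by linarith)
    (by linarith)
  rw [add_sub_cancel] at key
  rw [phase, ← key]
  constructor
  · rintro ⟨d, hd, rfl⟩
    exact ⟨d + p.1 / 2, by linear_combination hd, by simp⟩
  · rintro ⟨n, hn, rfl⟩
    exact ⟨n - p.1 / 2, by linear_combination hn, rfl⟩

theorem mem_S2_iff {k : ℕ} {p : ℤ × ℤ} :
    p ∈ S2 k ↔ phase k p = k ∨ phase k p = 2 * k + 1 := by
  rw [phase_eq_iff (i := 1) (by norm_num) (by norm_num) (by omega) (by omega),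
    phase_eq_iff (i := 2) (by norm_num) (by norm_num) (by omega) (by omega)]
  simp only [S2, Set.mem_insert_iff, Set.mem_singleton_iff]
  constructor
  · rintro ⟨x, n, rfl, hn⟩
    exact (by omega : (n - x / 2) % 4 = 1 ∨ (n - x / 2) % 4 = 2).imp
      (fun h => ⟨n, by ring, h⟩) (fun h => ⟨n, by ring, h⟩)
  · rintro (⟨n, hn, h⟩ | ⟨n, hn, h⟩) <;>
      exact ⟨p.1, n, Prod.ext rfl (by rw [hn]; ring), by omega⟩

theorem mem_S3_iff {k : ℕ} {p : ℤ × ℤ} :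
    p ∈ S3 k ↔ phase k p = 2 * k + 2 ∨ phase k p = 3 * k + 3 := by
  rw [phase_eq_iff (i := 2) (by norm_num) (by norm_num) (by omega) (by omega),
    phase_eq_iff (i := 3) (by norm_num) (by norm_num) (by omega) (by omega)]
  simp only [S3, Set.mem_insert_iff, Set.mem_singleton_iff]
  constructor
  · rintro ⟨x, n, rfl, hn⟩
    exact (by omega : (n - x / 2) % 4 = 2 ∨ (n - x / 2) % 4 = 3).imp
      (fun h => ⟨n, by ring, h⟩) (fun h => ⟨n, by ring, h⟩)
  · rintro (⟨n, hn, h⟩ | ⟨n, hn, h⟩) <;>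
      exact ⟨p.1, n, Prod.ext rfl (by rw [hn]; ring), by omega⟩

def verticalCopy (k : ℕ) (p : ℤ × ℤ) : Set (ℤ × ℤ) :=
  (fun t : ℤ => (p.1, p.2 + t)) '' puncturedInterval k

def tileCenters (k : ℕ) : Set (ℤ × ℤ) := {c | phase k c = k ∨ phase k c = 3 * k + 3}

def tileCenter (k : ℕ) (p : ℤ × ℤ) : ℤ × ℤ :=
  (p.1, p.2 + ((if phase k p ≤ 2 * k + 1 then k else 3 * k + 3) - phase k p))

theorem tileCenter_mem_tileCenters (k : ℕ) (p : ℤ × ℤ) : tileCenter k p ∈ tileCenters k := by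
  have := phase_lt k p
  have := phase_nonneg k p
  unfold tileCenter tileCenters
  split_ifs <;> rw [Set.mem_ofPred_eq, phase_add_snd (by omega) (by omega)] <;> omega

theorem mem_verticalCopy_iff {k : ℕ} {c : ℤ × ℤ} (hc : c ∈ tileCenters k) (z : ℤ × ℤ) :
    z ∈ verticalCopy k c ↔ z ∈ (S2 k ∪ S3 k)ᶜ ∧ tileCenter k z = c := by
  simp only [Set.mem_compl_iff, Set.mem_union, mem_S2_iff, mem_S3_iff, not_or]
  constructor
  · rintro ⟨t, ⟨ht0, htl, htr⟩, rfl⟩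
    have hc : phase k c = k ∨ phase k c = 3 * k + 3 := hc
    have hz : phase k (c.1, c.2 + t) = phase k c + t := phase_add_snd (by omega) (by omega)
    rw [tileCenter, hz]
    refine ⟨by omega, Prod.ext rfl ?_⟩
    split_ifs <;> dsimp only <;> omega
  · rintro ⟨hz, rfl⟩
    have := phase_lt k z
    have := phase_nonneg k z
    refine ⟨phase k z - if phase k z ≤ 2 * k + 1 then k else 3 * k + 3, ?_, ?_⟩
    · simp only [puncturedInterval, Set.mem_ofPred_eq]
      split_ifs <;> omega
    · exact Prod.ext rfl (by simp only [tileCenter]; ring)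

theorem X1_tiled_by_vertical_copies_general (k : ℕ) :
    ∃ 𝒞 : Set (Set (ℤ × ℤ)),
      (∀ C ∈ 𝒞, ∃ p : ℤ × ℤ, C = (fun t : ℤ => (p.1, p.2 + t)) '' puncturedInterval k) ∧
      𝒞.PairwiseDisjoint id ∧
      ⋃₀ 𝒞 = (S2 k ∪ S3 k)ᶜ := by
  refine ⟨verticalCopy k '' tileCenters k, ?_,
    Set.pairwiseDisjoint_image_of_mem_iff_fiber fun c hc => mem_verticalCopy_iff hc,
    Set.sUnion_image_eq_of_mem_iff_fiber (fun z _ => tileCenter_mem_tileCenters k z)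
      fun c hc => mem_verticalCopy_iff hc⟩
  rintro _ ⟨p, -, rfl⟩
  exact ⟨p, rfl⟩

/-- For `k ≡ 4 (mod 8)`, the set `X₁ = ℤ² \ (S₂ ∪ S₃)` is a disjoint union of
vertical copies of `T_k`. -/
theorem X1_tiled_by_vertical_copies (k : ℕ) (hk : 0 < k) (hmod : k % 8 = 4) :
    ∃ 𝒞 : Set (Set (ℤ × ℤ)),
      (∀ C ∈ 𝒞, ∃ p : ℤ × ℤ, C = (fun t : ℤ => (p.1, p.2 + t)) '' puncturedInterval k) ∧
      𝒞.PairwiseDisjoint id ∧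
      ⋃₀ 𝒞 = (S2 k ∪ S3 k)ᶜ :=
  X1_tiled_by_vertical_copies_general k
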